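/- arXiv:1410.4552 — 5 statements merged into one kernel-verified Lean document; each statement's English description precedes it below -/
import Mathlib

section
/- Let 0 < λ < 1 and n ≥ 1, and let a, b : ℤ → (0,∞) be n-periodic sequences (a_{i+n} = a_i and b_{i+n} = b_i for all i) such that a_i · b_{i+1} < λ² for all i ∈ ℤ, ∏_{i=0}^{n-1} a_i < λⁿ, and ∏_{i=0}^{n-1} b_i < λⁿ. Then there exists m ∈ ℤ that is simultaneously a forward λ-good index for a and a backward λ-good index for b, i.e., ∏_{i=0}^{k-1} a_{m+i} ≤ λ^k and ∏_{i=0}^{k-1} b_{m-i} ≤ λ^k for every k ≥ 1. -/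
/-!
Write `α i = log (a i / λ)` and `β i = log (b i / λ)`; the claim becomes that some `m` has all
forward partial sums of `α` from `m` and all backward partial sums of `β` from `m` nonpositive.
In terms of primitives `R`, `Q` of `α`, `β` on `ℤ`, this says `R j ≤ R m` for `j ≥ m` and
`Q (m + 1) ≤ Q j` for `j ≤ m + 1`. Since every window of length `n` has nonpositive sum, `R`
and `Q` decrease along the period, so `R` attains its maximum on `[0, ∞)` at some `m₀` and `Q`
its minimum on `(-∞, m₀ + 1]` at some `m + 1`. The domination `α i + β (i + 1) ≤ 0` makes
`R i + Q (i + 1)` antitone, which turns the minimality of `Q` at `m + 1` into `R j ≤ R m` for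
`m ≤ j ≤ m₀`; beyond `m₀`, `R` stays below `R m₀ ≤ R m`.
-/

open Finset Function Real

section PartialSum

variable {G : Type*} [AddCommGroup G]

noncomputable def partialSum (f : ℤ → G) (m : ℤ) : G :=
  ∑ i ∈ Ico 0 m, f i - ∑ i ∈ Ico m 0, f i

theorem partialSum_add_one (f : ℤ → G) (m : ℤ) :
    partialSum f (m + 1) = partialSum f m + f m := by
  unfold partialSum
  rcases le_or_gt 0 m with hm | hm
  · rw [← sum_Ico_add_eq_sum_Ico_add_one hm, Ico_eq_empty_of_le hm,
      Ico_eq_empty_of_le (by omega : (0 : ℤ) ≤ m + 1)]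
    abel
  · rw [← insert_Ico_add_one_left_eq_Ico hm, sum_insert (by simp),
      Ico_eq_empty_of_le hm.le, Ico_eq_empty_of_le (by omega : m + 1 ≤ 0)]
    abel

theorem partialSum_add_nat (f : ℤ → G) (m : ℤ) (k : ℕ) :
    partialSum f (m + k) = partialSum f m + ∑ i ∈ range k, f (m + i) := by
  induction k with
  | zero => simp
  | succ k ih =>
    rw [Nat.cast_succ, ← add_assoc, partialSum_add_one, ih, sum_range_succ, add_assoc]

theorem partialSum_sub_nat (f : ℤ → G) (m : ℤ) (k : ℕ) :
    partialSum f (m + 1) = partialSum f (m + 1 - k) + ∑ i ∈ range k, f (m - i) := by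
  induction k with
  | zero => simp
  | succ k ih =>
    rw [ih, sum_range_succ, ← add_assoc, show m + 1 - k = m - k + 1 by ring,
      partialSum_add_one, Nat.cast_succ, show m + 1 - (k + 1) = m - k by ring]
    abel

end PartialSum

theorem Function.Periodic.sum_range_add {G : Type*} [AddCommGroup G] {f : ℤ → G} {n : ℕ}
    (h : Periodic f n) (m : ℤ) : ∑ i ∈ range n, f (m + i) = ∑ i ∈ range n, f i := by
  have hshift : Periodic (fun m => ∑ i ∈ range n, f (m + i)) 1 := fun m => by
    have := sum_range_succ' (fun i : ℕ => f (m + i)) n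
    rw [sum_range_succ, Nat.cast_zero, add_zero, h m] at this
    simp only [Nat.cast_succ, ← add_assoc, add_right_comm m _ 1] at this
    exact add_right_cancel this.symm
  simpa using hshift.int_mul_eq m

theorem exists_isMaxOn_Ici_of_map_add_le {β : Type*} [LinearOrder β] {f : ℤ → β} {n : ℕ}
    (hn : 0 < n) (hf : ∀ m, f (m + n) ≤ f m) (x : ℤ) :
    ∃ m₀ ∈ Set.Ici x, IsMaxOn f (Set.Ici x) m₀ := by
  obtain ⟨m₀, hm₀, hmax⟩ := (Ico x (x + n)).exists_max_image f ⟨x, by simp [hn]⟩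
  refine ⟨m₀, (mem_Ico.1 hm₀).1, fun j hj => ?_⟩
  rw [Set.mem_Ici] at hj
  have hiter (y : ℤ) (t : ℕ) : f (y + t * n) ≤ f y := by
    induction t with
    | zero => simp
    | succ t ih =>
      have := hf (y + t * n)
      rw [add_assoc, ← add_one_mul] at this
      exact_mod_cast this.trans ih
  have hn' : (0 : ℤ) < n := by exact_mod_cast hn
  have hj : j = x + (j - x) % n + ((j - x) / n).toNat * n := by
    have := Int.emod_add_mul_ediv (j - x) n
    rw [Int.toNat_of_nonneg (Int.ediv_nonneg (by omega) hn'.le)]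
    linarith
  have hr : x + (j - x) % n ∈ Ico x (x + n) := by
    have := Int.emod_nonneg (j - x) hn'.ne'
    have := Int.emod_lt_of_pos (j - x) hn'
    simp only [mem_Ico]; omega
  rw [hj]
  exact (hiter _ _).trans (hmax _ hr)

theorem exists_isMinOn_Iic_of_map_add_le {β : Type*} [LinearOrder β] {f : ℤ → β} {n : ℕ}
    (hn : 0 < n) (hf : ∀ m, f (m + n) ≤ f m) (x : ℤ) :
    ∃ m₀ ∈ Set.Iic x, IsMinOn f (Set.Iic x) m₀ := by
  obtain ⟨m₀, hm₀, hmax⟩ :=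
    exists_isMaxOn_Ici_of_map_add_le (f := fun j => OrderDual.toDual (f (-j))) hn
      (fun m => by simpa [neg_add_eq_sub] using hf (-m - n)) (-x)
  refine ⟨-m₀, by simpa [neg_le] using hm₀, fun j (hj : j ≤ x) => ?_⟩
  simpa using hmax (show -x ≤ -j by omega)

theorem exists_forward_backward_sum_nonpos {G : Type*} [AddCommGroup G] [LinearOrder G]
    [IsOrderedAddMonoid G] {α β : ℤ → G} {n : ℕ} (hn : 0 < n)
    (hα : ∀ m, ∑ i ∈ range n, α (m + i) ≤ 0) (hβ : ∀ m, ∑ i ∈ range n, β (m + i) ≤ 0)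
    (hαβ : ∀ i, α i + β (i + 1) ≤ 0) :
    ∃ m, ∀ k, ∑ i ∈ range k, α (m + i) ≤ 0 ∧ ∑ i ∈ range k, β (m - i) ≤ 0 := by
  have hα' (m : ℤ) : partialSum α (m + n) ≤ partialSum α m := by
    rw [partialSum_add_nat]; exact add_le_of_nonpos_right (hα m)
  have hβ' (m : ℤ) : partialSum β (m + n) ≤ partialSum β m := by
    rw [partialSum_add_nat]; exact add_le_of_nonpos_right (hβ m)
  have hanti : Antitone fun i => partialSum α i + partialSum β (i + 1) :=
    antitone_int_of_succ_le fun i => by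
      rw [partialSum_add_one α, partialSum_add_one β, add_add_add_comm]
      exact add_le_of_nonpos_right (hαβ i)
  obtain ⟨m₀, hm₀, hmax⟩ := exists_isMaxOn_Ici_of_map_add_le hn hα' 0
  obtain ⟨m, hm, hmin⟩ := exists_isMinOn_Iic_of_map_add_le hn hβ' (m₀ + 1)
  rw [Set.mem_Iic] at hm
  have hbetween (j : ℤ) (hmj : m - 1 ≤ j) (hjm₀ : j ≤ m₀) :
      partialSum α j ≤ partialSum α (m - 1) := by
    have hle := hanti hmj
    have : partialSum β m ≤ partialSum β (j + 1) := hmin (by simp; omega)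
    simp only [sub_add_cancel] at hle
    exact le_of_add_le_add_right (hle.trans (add_le_add le_rfl this))
  refine ⟨m - 1, fun k => ⟨?_, ?_⟩⟩
  · have hforward : partialSum α (m - 1 + k) ≤ partialSum α (m - 1) := by
      rcases le_total (m - 1 + k) m₀ with h | h
      · exact hbetween _ (by omega) h
      · exact (hmax (Set.mem_Ici.2 (hm₀.trans h))).trans (hbetween m₀ (by omega) le_rfl)
    rwa [partialSum_add_nat, add_le_iff_nonpos_right] at hforward
  · have hbackward : partialSum β m ≤ partialSum β (m - k) := hmin (by simp; omega)
    have hsum := partialSum_sub_nat β (m - 1) k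
    rw [sub_add_cancel] at hsum
    rwa [hsum, add_le_iff_nonpos_right] at hbackward

theorem Real.prod_le_pow_card_iff_sum_log_div_nonpos {ι : Type*} {s : Finset ι} {f : ι → ℝ}
    {c : ℝ} (hf : ∀ i ∈ s, 0 < f i) (hc : 0 < c) :
    ∏ i ∈ s, f i ≤ c ^ #s ↔ ∑ i ∈ s, log (f i / c) ≤ 0 := by
  rw [← log_prod fun i hi => (div_pos (hf i hi) hc).ne',
    log_nonpos_iff (prod_nonneg fun i hi => (div_pos (hf i hi) hc).le), prod_div_distrib,
    prod_const, div_le_one (pow_pos hc _)]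

theorem exists_forward_and_backward_good_index_general (lam : ℝ) (hlam0 : 0 < lam)
    (n : ℕ) (hn : 1 ≤ n) (a b : ℤ → ℝ)
    (ha : ∀ i : ℤ, 0 < a i) (hb : ∀ i : ℤ, 0 < b i)
    (hap : ∀ i : ℤ, a (i + n) = a i) (hbp : ∀ i : ℤ, b (i + n) = b i)
    (hdom : ∀ i : ℤ, a i * b (i + 1) < lam ^ 2)
    (hproda : ∏ i ∈ Finset.range n, a i < lam ^ n)
    (hprodb : ∏ i ∈ Finset.range n, b i < lam ^ n) :
    ∃ m : ℤ, ∀ k : ℕ, 1 ≤ k →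
      (∏ i ∈ Finset.range k, a (m + i) ≤ lam ^ k) ∧
      (∏ i ∈ Finset.range k, b (m - i) ≤ lam ^ k) := by
  have hwindow {f : ℤ → ℝ} (hf : ∀ i, 0 < f i) (hper : Periodic f n)
      (hprod : ∏ i ∈ range n, f i < lam ^ n) (m : ℤ) :
      ∑ i ∈ range n, log (f (m + i) / lam) ≤ 0 := by
    have hper' : Periodic (fun i => log (f i / lam)) n :=
      hper.comp fun x => log (x / lam)
    rw [hper'.sum_range_add]
    exact (Real.prod_le_pow_card_iff_sum_log_div_nonpos (s := range n) (fun i _ => hf i)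
      hlam0).1 (by simpa using hprod.le)
  have hdom' (i : ℤ) : log (a i / lam) + log (b (i + 1) / lam) ≤ 0 := by
    rw [← log_mul (div_pos (ha i) hlam0).ne' (div_pos (hb _) hlam0).ne', div_mul_div_comm,
      ← sq]
    exact log_nonpos (div_pos (mul_pos (ha i) (hb _)) (pow_pos hlam0 2)).le
      ((div_le_one (pow_pos hlam0 2)).2 (hdom i).le)
  obtain ⟨m, hm⟩ := exists_forward_backward_sum_nonpos (α := fun i => log (a i / lam))
    (β := fun i => log (b i / lam)) hn
    (hwindow ha hap hproda) (hwindow hb hbp hprodb) hdom'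
  refine ⟨m, fun k _ => ⟨?_, ?_⟩⟩
  · simpa using (Real.prod_le_pow_card_iff_sum_log_div_nonpos (fun i _ => ha _) hlam0).2 (hm k).1
  · simpa using (Real.prod_le_pow_card_iff_sum_log_div_nonpos (fun i _ => hb _) hlam0).2 (hm k).2

/-- The 'good point' lemma (Lemma 4.2) in sequence form: for `n`-periodic positive
sequences `a`, `b` with `a i * b (i+1) < λ²` and products over the period `< λⁿ`,
some index `m` is simultaneously forward `λ`-good for `a` and backward `λ`-good for `b`. -/
theorem exists_forward_and_backward_good_index (lam : ℝ) (hlam0 : 0 < lam) (hlam1 : lam < 1)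
    (n : ℕ) (hn : 1 ≤ n) (a b : ℤ → ℝ)
    (ha : ∀ i : ℤ, 0 < a i) (hb : ∀ i : ℤ, 0 < b i)
    (hap : ∀ i : ℤ, a (i + n) = a i) (hbp : ∀ i : ℤ, b (i + n) = b i)
    (hdom : ∀ i : ℤ, a i * b (i + 1) < lam ^ 2)
    (hproda : ∏ i ∈ Finset.range n, a i < lam ^ n)
    (hprodb : ∏ i ∈ Finset.range n, b i < lam ^ n) :
    ∃ m : ℤ, ∀ k : ℕ, 1 ≤ k →
      (∏ i ∈ Finset.range k, a (m + i) ≤ lam ^ k) ∧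
      (∏ i ∈ Finset.range k, b (m - i) ≤ lam ^ k) :=
  exists_forward_and_backward_good_index_general lam hlam0 n hn a b ha hb hap hbp hdom hproda hprodb
end

section
/- Let 0 < λ < 1, let a : ℤ → (0,∞) be a sequence, and let c < d be integers. Suppose d is a forward λ-good index for a and no integer l with c ≤ l < d is a forward λ-good index for a. Then for every integer l with c ≤ l < d one has ∏_{j=l}^{d-1} a_j > λ^{d-l}. -/
/-- `m` is a forward `λ`-good index for `a`: all forward partial products starting at `m`
are bounded by the corresponding powers of `λ`. -/
def IsForwardGood (lam : ℝ) (a : ℤ → ℝ) (m : ℤ) : Prop :=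
  ∀ k : ℕ, 1 ≤ k → ∏ i ∈ Finset.range k, a (m + i) ≤ lam ^ k

/-- The Claim inside the proof of Lemma 4.2: on a maximal gap `[c, d)` of indices that
are not forward `λ`-good, immediately preceding a forward `λ`-good index `d`, every
product `∏_{j=l}^{d-1} a j` beats the rate `λ^{d-l}`. -/
theorem gap_products_exceed_rate (lam : ℝ) (hlam0 : 0 < lam) (hlam1 : lam < 1)
    (a : ℤ → ℝ) (ha : ∀ i : ℤ, 0 < a i) (c d : ℤ) (hcd : c < d)
    (hd : IsForwardGood lam a d)
    (hbad : ∀ l : ℤ, c ≤ l → l < d → ¬ IsForwardGood lam a l) :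
    ∀ l : ℤ, c ≤ l → l < d →
      lam ^ (d - l).toNat < ∏ j ∈ Finset.range (d - l).toNat, a (l + j) := by
  have key : ∀ n : ℕ, ∀ l : ℤ, c ≤ l → l < d → (d - l).toNat = n →
      lam ^ n < ∏ j ∈ Finset.range n, a (l + j) := by
    intro n
    induction n using Nat.strong_induction_on with
    | _ n ih =>
      intro l hcl hld hn
      have hdl : (d - l : ℤ) = (n : ℤ) := by omega
      have hbadl := hbad l hcl hld
      simp only [IsForwardGood, not_forall, not_le] at hbadl
      obtain ⟨k, hk1, hk⟩ := hbadl
      have hP : 0 < ∏ i ∈ Finset.range n, a (l + i) :=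
        Finset.prod_pos fun i _ => ha _
      rcases le_or_gt n k with hnk | hkn
      · -- the witness block reaches past d
        have hsplit : ∏ i ∈ Finset.range k, a (l + i) =
            (∏ i ∈ Finset.range n, a (l + i)) * ∏ i ∈ Finset.range (k - n), a (d + i) := by
          have hk' : k = n + (k - n) := by omega
          rw [hk', Finset.prod_range_add]
          exact congrArg (fun x => (∏ i ∈ Finset.range n, a (l + i)) * x)
            (Finset.prod_congr (by congr 1; omega) fun i _ => by congr 1; push_cast; omega)
        have hgood : ∏ i ∈ Finset.range (k - n), a (d + i) ≤ lam ^ (k - n) := by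
          rcases Nat.eq_zero_or_pos (k - n) with h0 | hpos
          · simp [h0]
          · exact hd _ hpos
        have hlamp : 0 < lam ^ (k - n) := pow_pos hlam0 _
        have hkeq : lam ^ k = lam ^ n * lam ^ (k - n) := by
          rw [← pow_add]; congr 1; omega
        have : lam ^ n * lam ^ (k - n) <
            (∏ i ∈ Finset.range n, a (l + i)) * lam ^ (k - n) := by
          calc lam ^ n * lam ^ (k - n) = lam ^ k := hkeq.symm
            _ < ∏ i ∈ Finset.range k, a (l + i) := hk
            _ = (∏ i ∈ Finset.range n, a (l + i)) * ∏ i ∈ Finset.range (k - n), a (d + i) :=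
                hsplit
            _ ≤ (∏ i ∈ Finset.range n, a (l + i)) * lam ^ (k - n) := by
                exact mul_le_mul_of_nonneg_left hgood hP.le
        exact lt_of_mul_lt_mul_right this hlamp.le
      · -- the witness block is inside the gap; use induction at l + k
        have hk0 : (0 : ℤ) < (k : ℤ) := by exact_mod_cast hk1
        have hih := ih (n - k) (by omega) (l + k) (by omega) (by omega) (by omega)
        have hsplit : ∏ i ∈ Finset.range n, a (l + i) =
            (∏ i ∈ Finset.range k, a (l + i)) *
              ∏ i ∈ Finset.range (n - k), a ((l + k) + i) := by
          have hn' : n = k + (n - k) := by omega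
          rw [hn', Finset.prod_range_add]
          exact congrArg (fun x => (∏ i ∈ Finset.range k, a (l + i)) * x)
            (Finset.prod_congr (by congr 1; omega) fun i _ => by congr 1; push_cast; ring)
        calc lam ^ n = lam ^ k * lam ^ (n - k) := by rw [← pow_add]; congr 1; omega
          _ < (∏ i ∈ Finset.range k, a (l + i)) *
              ∏ i ∈ Finset.range (n - k), a ((l + k) + i) :=
            mul_lt_mul'' hk hih (pow_pos hlam0 _).le (pow_pos hlam0 _).le
          _ = ∏ i ∈ Finset.range n, a (l + i) := hsplit.symm
  intro l hcl hld
  exact key (d - l).toNat l hcl hld rfl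
end

section
/- Let 0 < λ < 1 and let a, b : ℤ → (0,∞) be sequences with a_j · b_{j+1} < λ² for all j ∈ ℤ, and let c < d be integers. If c is a backward λ-good index for b and ∏_{j=l}^{d-1} a_j > λ^{d-l} for every integer l with c ≤ l < d, then d is a backward λ-good index for b. -/
/-- `m` is a backward `λ`-good index for `b`: all backward partial products starting at `m`
are bounded by the corresponding powers of `λ`. -/
def IsBackwardGood (lam : ℝ) (b : ℤ → ℝ) (m : ℤ) : Prop :=
  ∀ k : ℕ, 1 ≤ k → ∏ i ∈ Finset.range k, b (m - i) ≤ lam ^ k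

/-- The final step of the proof of Lemma 4.2: the domination `a j * b (j+1) < λ²`
converts the lower bounds `∏_{j=l}^{d-1} a j > λ^{d-l}` into backward goodness at `d`,
given backward goodness at `c`. -/
theorem backwardGood_of_gap_bounds (lam : ℝ) (hlam0 : 0 < lam) (hlam1 : lam < 1)
    (a b : ℤ → ℝ) (ha : ∀ j : ℤ, 0 < a j) (hb : ∀ j : ℤ, 0 < b j)
    (hdom : ∀ j : ℤ, a j * b (j + 1) < lam ^ 2)
    (c d : ℤ) (hcd : c < d)
    (hc : IsBackwardGood lam b c)
    (hlow : ∀ l : ℤ, c ≤ l → l < d →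
      lam ^ (d - l).toNat < ∏ j ∈ Finset.range (d - l).toNat, a (l + j)) :
    IsBackwardGood lam b d := by
  set n : ℕ := (d - c).toNat with hn
  have hdc : (n : ℤ) = d - c := Int.toNat_of_nonneg (by omega)
  have hn1 : 1 ≤ n := by omega
  -- key: for 1 ≤ k ≤ n the bound holds
  have key : ∀ k : ℕ, 1 ≤ k → k ≤ n → ∏ i ∈ Finset.range k, b (d - i) ≤ lam ^ k := by
    intro k hk1 hkn
    set l : ℤ := d - k with hl
    have hcl : c ≤ l := by omega
    have hld : l < d := by omega
    have htn : (d - l).toNat = k := by omega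
    have hA := hlow l hcl hld
    rw [htn] at hA
    have hApos : 0 < ∏ j ∈ Finset.range k, a (l + j) :=
      Finset.prod_pos (fun j _ => ha _)
    have hAB : ∏ j ∈ Finset.range k, (a (l + j) * b (l + j + 1)) ≤ (lam ^ 2) ^ k := by
      calc ∏ j ∈ Finset.range k, (a (l + j) * b (l + j + 1))
          ≤ ∏ _j ∈ Finset.range k, lam ^ 2 := by
            apply Finset.prod_le_prod
            · intro j _; exact le_of_lt (mul_pos (ha _) (hb _))
            · intro j _; exact le_of_lt (hdom _)
        _ = (lam ^ 2) ^ k := by rw [Finset.prod_const, Finset.card_range]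
    rw [Finset.prod_mul_distrib] at hAB
    have hBpos : 0 < ∏ j ∈ Finset.range k, b (l + j + 1) :=
      Finset.prod_pos (fun j _ => hb _)
    have hB : ∏ j ∈ Finset.range k, b (l + j + 1) ≤ lam ^ k := by
      have hlk : (0:ℝ) < lam ^ k := pow_pos hlam0 k
      have h2 : (lam ^ 2) ^ k = lam ^ k * lam ^ k := by ring
      nlinarith [hA, hAB, hBpos, hlk, h2]
    -- reindex: b (d - i) = b (l + (k-1-i) + 1)
    have hre : ∏ i ∈ Finset.range k, b (d - i) = ∏ j ∈ Finset.range k, b (l + j + 1) := by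
      rw [← Finset.prod_range_reflect (fun j => b (l + j + 1)) k]
      apply Finset.prod_congr rfl
      intro i hi
      simp only [Finset.mem_range] at hi
      congr 1
      have : (↑(k - 1 - i) : ℤ) = k - 1 - i := by
        push_cast [Nat.cast_sub (by omega : i ≤ k - 1), Nat.cast_sub (by omega : 1 ≤ k)]
        ring
      omega
    rw [hre]; exact hB
  intro k hk1
  by_cases hkn : k ≤ n
  · exact key k hk1 hkn
  · push_neg at hkn
    have hsplit : k = n + (k - n) := by omega
    rw [hsplit, Finset.prod_range_add]
    have h2 : ∏ i ∈ Finset.range (k - n), b (d - ((n : ℕ) + i : ℕ)) =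
        ∏ i ∈ Finset.range (k - n), b (c - i) := by
      apply Finset.prod_congr rfl
      intro i _
      congr 1
      push_cast
      omega
    rw [h2, pow_add]
    apply mul_le_mul (key n hn1 le_rfl) (hc (k - n) (by omega))
      (le_of_lt (Finset.prod_pos (fun i _ => hb _))) (le_of_lt (pow_pos hlam0 n))
end

section
/- Let X be a compact metric space, f : X → X a homeomorphism, φ, ψ : X → ℝ continuous functions, 0 < λ < λ₁ < λ₂ < 1 constants with φ(x) + ψ(f(x)) < 2 log λ for all x ∈ X, and δ > 0. Assume: (i) q ∈ X is a periodic point of f whose orbit is a δ-net of X and which satisfies ∑_{i=0}^{k-1} φ(f^i(q)) ≤ k log λ and ∑_{i=0}^{k-1} ψ(f^{-i}(q)) ≤ k log λ for every k ≥ 1; (ii) there exists b ∈ X with ∑_{i=0}^{k-1} φ(f^i(b)) ≥ 0 for every k ≥ 1. Then there exist n ≥ 1 and points x_0, x_1, …, x_n ∈ X with d(f(x_i), x_{i+1}) < δ for all 0 ≤ i < n and x_0 = x_n = q, such that: (1) ∑_{i=0}^{k-1} φ(x_i) < k log λ₂ and ∑_{i=k}^{n} ψ(x_i) < (n-k+1)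 log λ₂ for every 1 ≤ k ≤ n; (2) ∑_{i=0}^{n-1} φ(x_i) > n log λ₁. -/
/-!
Follow the orbit of `q` for `P` steps, jump to `b`, follow the orbit of `b` for `L + 1` steps
and jump back to the orbit of `q`, following it until it returns to `q`. The prefix along `q`
builds up a deficit of at least `P (log λ₂ - log λ)` below the rate `log λ₂` in the `φ`-sums.
The length `L` is the first time the `φ`-sums along `b`, which are nonnegative, have used up this
deficit up to a bounded margin: then every `φ`-prefix sum stays below rate `log λ₂`, while the
total is about `(P + L + 1) log λ₂`, which exceeds `n log λ₁` once `P` is large. Since the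
excess `S L - L log λ₂` of the `φ`-sums `S` along `b` dominates all earlier ones, the domination
`φ x + ψ (f x) < 2 log λ` bounds the `ψ`-sums over final stretches of the `b`-segment by the
rate `2 log λ - log λ₂ < log λ₂`, with a gain of `2 (log λ₂ - log λ)` per step that pays for the
jump; along the orbit of `q` the `ψ`-sums are backward Birkhoff sums from a point of a periodic
orbit, hence differ from those from `q` itself by a bounded amount.
-/

open Function Finset Filter

theorem Equiv.Perm.exists_lt_iterate_eq_zpow_apply {α : Type*} (σ : Equiv.Perm α) {m : ℕ}
    {x : α} (hm : 0 < m) (hx : IsPeriodicPt σ m x) (i : ℤ) : ∃ j < m, σ^[j] x = (σ ^ i) x := by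
  obtain ⟨j, hj⟩ := Int.eq_ofNat_of_zero_le (Int.emod_nonneg i (by omega : (m : ℤ) ≠ 0))
  have hjm : (j : ℤ) < m := hj ▸ Int.emod_lt_of_pos i (by omega)
  refine ⟨j, by omega, ?_⟩
  have hfix : (σ ^ m) x = x := by rw [Equiv.Perm.coe_pow]; exact hx
  conv_rhs => rw [← Int.emod_add_mul_ediv i m]
  rw [zpow_add, zpow_mul, Equiv.Perm.mul_apply, zpow_natCast σ m,
    Equiv.Perm.zpow_apply_eq_self_of_apply_eq_self hfix, hj, zpow_natCast, Equiv.Perm.coe_pow]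

theorem Function.IsPeriodicPt.exists_le_iterate_eq_of_leftInverse {α : Type*} {f g : α → α}
    {x : α} {m : ℕ} (hgf : LeftInverse g f) (hx : IsPeriodicPt f m x) (hm : 0 < m) (i : ℕ) :
    ∃ w ≤ m, g^[w] x = f^[i] x := by
  refine ⟨m - i % m, Nat.sub_le _ _, ?_⟩
  calc g^[m - i % m] x = g^[m - i % m] (f^[m - i % m] (f^[i % m] x)) := by
        rw [← iterate_add_apply, Nat.sub_add_cancel (Nat.mod_lt i hm).le, hx.eq]
    _ = f^[i] x := by rw [hgf.iterate, hx.iterate_mod_apply]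

theorem Function.IsPeriodicPt.frequently_iterate_eq {α : Type*} {f : α → α} {x : α} {m : ℕ}
    (hx : IsPeriodicPt f m x) (hm : 0 < m) (j : ℕ) : ∃ᶠ n in atTop, f^[n] x = f^[j] x :=
  frequently_atTop.2 fun a =>
    ⟨j + m * a, by nlinarith, by rw [iterate_add_apply, (hx.mul_const a).eq]⟩

theorem Equiv.Perm.exists_lt_dist_iterate_lt {α : Type*} [PseudoMetricSpace α]
    (σ : Equiv.Perm α) {m : ℕ} {x y : α} {δ : ℝ} (hm : 0 < m) (hx : IsPeriodicPt σ m x)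
    (hy : ∃ i : ℤ, dist y ((σ ^ i) x) < δ) : ∃ j < m, dist y (σ^[j] x) < δ := by
  obtain ⟨i, hi⟩ := hy
  obtain ⟨j, hjm, hj⟩ := σ.exists_lt_iterate_eq_zpow_apply hm hx i
  exact ⟨j, hjm, hj ▸ hi⟩

theorem Equiv.Perm.frequently_dist_iterate_lt {α : Type*} [PseudoMetricSpace α]
    (σ : Equiv.Perm α) {m : ℕ} {x y : α} {δ : ℝ} (hm : 0 < m) (hx : IsPeriodicPt σ m x)
    (hy : ∃ i : ℤ, dist y ((σ ^ i) x) < δ) : ∃ᶠ n in atTop, dist (σ^[n] x) y < δ := by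
  obtain ⟨j, -, hj⟩ := σ.exists_lt_dist_iterate_lt hm hx hy
  exact (hx.frequently_iterate_eq hm j).mono fun n hn => by rwa [hn, dist_comm]

section BirkhoffSum

variable {α : Type*} {f : α → α}

theorem birkhoffSum_iterate_of_leftInverse {M : Type*} [AddCommMonoid M] {g : α → α}
    (hgf : LeftInverse g f) (h : α → M) (n : ℕ) (x : α) :
    birkhoffSum g h (n + 1) (f^[n] x) = birkhoffSum f h (n + 1) x := by
  induction n with
  | zero => rfl
  | succ n ih =>
    rw [birkhoffSum_succ', iterate_succ_apply', hgf, ih, birkhoffSum_succ f h (n + 1),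
      iterate_succ_apply', add_comm]

theorem abs_birkhoffSum_le {h : α → ℝ} {M : ℝ} (hM : ∀ x, |h x| ≤ M) (n : ℕ) (x : α) :
    |birkhoffSum f h n x| ≤ n * M :=
  calc _ ≤ ∑ k ∈ range n, |h (f^[k] x)| := abs_sum_le_sum_abs _ _
    _ ≤ n * M := by simpa using sum_le_card_nsmul (range n) _ M fun k _ => hM _

theorem birkhoffSum_iterate_le {h : α → ℝ} {M : ℝ} (hM : ∀ x, |h x| ≤ M) (n s : ℕ) (x : α) :
    birkhoffSum f h n (f^[s] x) ≤ birkhoffSum f h n x + 2 * s * M := by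
  have h₁ := birkhoffSum_add f h s n x
  have h₂ := birkhoffSum_add f h n s x
  rw [add_comm n s] at h₂
  have h₃ := abs_le.1 (abs_birkhoffSum_le (f := f) hM s x)
  have h₄ := abs_le.1 (abs_birkhoffSum_le (f := f) hM s (f^[n] x))
  linarith

theorem birkhoffSum_apply_le_of_add_le {φ ψ : α → ℝ} {c : ℝ} (h : ∀ x, φ x + ψ (f x) ≤ c)
    (n : ℕ) (x : α) : birkhoffSum f ψ n (f x) ≤ n * c - birkhoffSum f φ n x := by
  have : birkhoffSum f φ n x + birkhoffSum f ψ n (f x) ≤ n * c := by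
    simp only [birkhoffSum, ← sum_add_distrib, ← iterate_succ_apply, iterate_succ_apply']
    simpa using sum_le_card_nsmul (range n) _ c fun k _ => h _
  linarith

end BirkhoffSum

theorem exists_first_passage {U : ℕ → ℝ} {H K : ℝ} (hU : ∀ j, |U (j + 1) - U j| ≤ K)
    (h0 : U 0 ≤ H) (hH : ∃ j, H < U j) :
    ∃ L, H < U L ∧ (∀ j < L, U j ≤ H) ∧ (∀ j ≤ L + 1, U j ≤ H + 2 * K) ∧ H - K < U (L + 1) := by
  classical
  have hK : 0 ≤ K := (abs_nonneg _).trans (hU 0)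
  have hL : H < U (Nat.find hH) := Nat.find_spec hH
  have hbelow : ∀ j < Nat.find hH, U j ≤ H := fun j hj => not_lt.1 (Nat.find_min hH hj)
  have hpos : 0 < Nat.find hH := Nat.pos_of_ne_zero fun h => by rw [h] at hL; linarith
  have hstep := fun j => abs_le.1 (hU j)
  refine ⟨Nat.find hH, hL, hbelow, fun j hj => ?_, by linarith [hstep (Nat.find hH)]⟩
  rcases lt_trichotomy j (Nat.find hH) with hj' | rfl | hj'
  · linarith [hbelow j hj']
  · obtain ⟨i, hi⟩ := Nat.exists_eq_add_one_of_ne_zero hpos.ne'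
    rw [hi] at hbelow ⊢
    linarith [hbelow i (by omega), hstep i]
  · obtain rfl : j = Nat.find hH + 1 := by omega
    obtain ⟨i, hi⟩ := Nat.exists_eq_add_one_of_ne_zero hpos.ne'
    rw [hi] at hbelow ⊢
    linarith [hbelow i (by omega), hstep i, hstep (i + 1)]

theorem sum_Ico_eq_birkhoffSum {X M : Type*} [AddCommMonoid M] {f : X → X} {x : ℕ → X}
    {a ℓ : ℕ} {y : X} (hx : ∀ i < ℓ, x (a + i) = f^[i] y) (h : X → M) :
    ∑ i ∈ Ico a (a + ℓ), h (x i) = birkhoffSum f h ℓ y := by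
  rw [sum_Ico_eq_sum_range, Nat.add_sub_cancel_left]
  exact sum_congr rfl fun i hi => by rw [hx i (mem_range.1 hi)]

theorem Finset.sum_Ico_add_sum_Icc {M : Type*} [AddCommMonoid M] (h : ℕ → M) {k c n : ℕ}
    (hkc : k ≤ c) (hcn : c ≤ n + 1) :
    ∑ i ∈ Ico k c, h i + ∑ i ∈ Icc c n, h i = ∑ i ∈ Icc k n, h i := by
  simp only [← Ico_add_one_right_eq_Icc]
  exact sum_Ico_consecutive h hkc hcn

theorem eventually_le_natCast_mul {c ε : ℝ} (hε : 0 < ε) : ∀ᶠ n : ℕ in atTop, c ≤ n * ε :=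
  (tendsto_natCast_atTop_atTop.atTop_mul_const hε).eventually_ge_atTop c

section PseudoOrbit

variable {X : Type*} (f : X → X) (q b : X) (P L j : ℕ)

def pseudoOrbit (i : ℕ) : X :=
  if i < P then f^[i] q else if i ≤ P + L then f^[i - P] b else f^[i - (P + L + 1)] (f^[j] q)

variable {f q b P L j}

theorem pseudoOrbit_of_lt {i : ℕ} (hi : i < P) : pseudoOrbit f q b P L j i = f^[i] q :=
  if_pos hi

theorem pseudoOrbit_add_of_le {i : ℕ} (hi : i ≤ L) :
    pseudoOrbit f q b P L j (P + i) = f^[i] b := by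
  simp [pseudoOrbit, hi]

theorem pseudoOrbit_add_add (i : ℕ) :
    pseudoOrbit f q b P L j (P + L + 1 + i) = f^[i] (f^[j] q) := by
  unfold pseudoOrbit
  rw [if_neg (by omega), if_neg (by omega), Nat.add_sub_cancel_left]

theorem pseudoOrbit_succ {i : ℕ} (h₁ : i + 1 ≠ P) (h₂ : i ≠ P + L) :
    pseudoOrbit f q b P L j (i + 1) = f (pseudoOrbit f q b P L j i) := by
  unfold pseudoOrbit
  split_ifs <;> rw [← iterate_succ_apply' f] <;> first | rfl | omega | (congr 1; omega)

theorem dist_pseudoOrbit_lt [PseudoMetricSpace X] {δ : ℝ} (hδ : 0 < δ)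
    (hin : dist (f^[P] q) b < δ) (hout : dist (f^[L + 1] b) (f^[j] q) < δ) (i : ℕ) :
    dist (f (pseudoOrbit f q b P L j i)) (pseudoOrbit f q b P L j (i + 1)) < δ := by
  by_cases h₁ : i + 1 = P
  · have hb : pseudoOrbit f q b P L j P = b := by
      simpa using pseudoOrbit_add_of_le (f := f) (q := q) (b := b) (P := P) (j := j) L.zero_le
    rwa [h₁, hb, pseudoOrbit_of_lt (by omega), ← iterate_succ_apply' f, Nat.succ_eq_add_one, h₁]
  by_cases h₂ : i = P + L
  · rwa [h₂, pseudoOrbit_add_of_le le_rfl, ← iterate_succ_apply' f, ← add_zero (P + L + 1),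
      pseudoOrbit_add_add]
  rwa [pseudoOrbit_succ h₁ h₂, dist_self]

theorem sum_range_pseudoOrbit_of_le {M : Type*} [AddCommMonoid M] (h : X → M) {k : ℕ}
    (hk : k ≤ P) : ∑ i ∈ range k, h (pseudoOrbit f q b P L j i) = birkhoffSum f h k q :=
  sum_congr rfl fun i hi => by rw [pseudoOrbit_of_lt (by grind)]

theorem sum_range_pseudoOrbit_add {M : Type*} [AddCommMonoid M] (h : X → M) {a : ℕ}
    (ha : a ≤ L + 1) : ∑ i ∈ range (P + a), h (pseudoOrbit f q b P L j i) =
      birkhoffSum f h P q + birkhoffSum f h a b := by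
  rw [sum_range_add, sum_range_pseudoOrbit_of_le h le_rfl]
  exact congrArg _ (sum_congr rfl fun i hi => by rw [pseudoOrbit_add_of_le (by grind)])

theorem sum_range_pseudoOrbit_add_add {M : Type*} [AddCommMonoid M] (h : X → M) (t : ℕ) :
    ∑ i ∈ range (P + L + 1 + t), h (pseudoOrbit f q b P L j i) =
      birkhoffSum f h P q + birkhoffSum f h (L + 1) b + birkhoffSum f h t (f^[j] q) := by
  rw [sum_range_add, add_assoc P, sum_range_pseudoOrbit_add h le_rfl]
  exact congrArg _ (sum_congr rfl fun i _ => by rw [← add_assoc, pseudoOrbit_add_add])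

theorem sum_Ico_pseudoOrbit_of_le {M : Type*} [AddCommMonoid M] (h : X → M) {k : ℕ}
    (hk : k ≤ P) :
    ∑ i ∈ Ico k P, h (pseudoOrbit f q b P L j i) = birkhoffSum f h (P - k) (f^[k] q) := by
  conv_lhs => rw [← Nat.add_sub_cancel' hk]
  refine sum_Ico_eq_birkhoffSum (fun i hi => ?_) h
  rw [pseudoOrbit_of_lt (by omega), add_comm k, iterate_add_apply]

theorem sum_Ico_pseudoOrbit_add_of_le {M : Type*} [AddCommMonoid M] (h : X → M) {a : ℕ}
    (ha : a ≤ L) : ∑ i ∈ Ico (P + a + 1) (P + L + 1), h (pseudoOrbit f q b P L j i) =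
      birkhoffSum f h (L - a) (f^[a + 1] b) := by
  rw [show P + L + 1 = P + a + 1 + (L - a) by omega]
  refine sum_Ico_eq_birkhoffSum (fun i hi => ?_) h
  rw [show P + a + 1 + i = P + (i + (a + 1)) by omega, pseudoOrbit_add_of_le (by omega),
    iterate_add_apply]

theorem sum_Icc_pseudoOrbit_add_add {M : Type*} [AddCommMonoid M] (h : X → M) {t r : ℕ}
    (ht : t ≤ r) : ∑ i ∈ Icc (P + L + 1 + t) (P + L + 1 + r), h (pseudoOrbit f q b P L j i) =
      birkhoffSum f h (r - t + 1) (f^[t] (f^[j] q)) := by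
  rw [← Ico_add_one_right_eq_Icc, show P + L + 1 + r + 1 = P + L + 1 + t + (r - t + 1) by omega]
  refine sum_Ico_eq_birkhoffSum (fun i hi => ?_) h
  rw [add_assoc _ t, pseudoOrbit_add_add, add_comm t, iterate_add_apply]

end PseudoOrbit

section Estimates

variable {X : Type*} {f : X → X} {q b : X} {P L j : ℕ} {φ ψ : X → ℝ} {α β M : ℝ}

theorem sum_range_pseudoOrbit_lt {m r k : ℕ} (hφM : ∀ x, |φ x| ≤ M)
    (hqφ : ∀ n, birkhoffSum f φ n q ≤ n * α) (hαβ : α < β) (hβM : β ≤ M) (hr : r ≤ m)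
    (hmid : ∀ a ≤ L + 1,
      birkhoffSum f φ P q + birkhoffSum f φ a b + m * (M - β) < (P + a) * β)
    (hk : 0 < k) (hkn : k ≤ P + L + 1 + r) :
    ∑ i ∈ range k, φ (pseudoOrbit f q b P L j i) < k * β := by
  rcases le_or_gt k P with hkP | hPk
  · rw [sum_range_pseudoOrbit_of_le φ hkP]
    exact (hqφ k).trans_lt (mul_lt_mul_of_pos_left hαβ (by exact_mod_cast hk))
  have hmM : 0 ≤ m * (M - β) := mul_nonneg m.cast_nonneg (by linarith)
  rcases le_or_gt k (P + L + 1) with hkL | hLk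
  · obtain ⟨a, rfl⟩ := Nat.exists_eq_add_of_le hPk.le
    rw [sum_range_pseudoOrbit_add φ (by omega)]
    push_cast
    linarith [hmid a (by omega)]
  · obtain ⟨t, rfl⟩ := Nat.exists_eq_add_of_le hLk.le
    rw [sum_range_pseudoOrbit_add_add]
    have htail := (abs_le.1 (abs_birkhoffSum_le (f := f) hφM t (f^[j] q))).2
    have htm : t * (M - β) ≤ m * (M - β) :=
      mul_le_mul_of_nonneg_right (by exact_mod_cast (by omega : t ≤ m)) (by linarith)
    have hmid' := hmid (L + 1) le_rfl
    push_cast at hmid' ⊢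
    linarith

theorem lt_sum_range_pseudoOrbit {m r : ℕ} (hφM : ∀ x, |φ x| ≤ M) (hβ : β ≤ 0) (hr : r ≤ m)
    (htotal : (P + L + 1) * β + m * M < birkhoffSum f φ P q + birkhoffSum f φ (L + 1) b) :
    ((P + L + 1 + r : ℕ) : ℝ) * β <
      ∑ i ∈ range (P + L + 1 + r), φ (pseudoOrbit f q b P L j i) := by
  rw [sum_range_pseudoOrbit_add_add]
  have htail := (abs_le.1 (abs_birkhoffSum_le (f := f) hφM r (f^[j] q))).1
  have hrm : (r : ℝ) ≤ m := by exact_mod_cast hr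
  have hM : 0 ≤ M := (abs_nonneg _).trans (hφM q)
  push_cast
  nlinarith

theorem sum_Icc_pseudoOrbit_add_add_le {g : X → X} (hgf : LeftInverse g f) {r t : ℕ}
    (hq : IsPeriodicPt f (j + r) q) (hqψ : ∀ n, birkhoffSum g ψ n q ≤ n * α) (ht : t ≤ r) :
    ∑ i ∈ Icc (P + L + 1 + t) (P + L + 1 + r), ψ (pseudoOrbit f q b P L j i) ≤
      (r - t + 1) * α := by
  rw [sum_Icc_pseudoOrbit_add_add ψ ht, ← birkhoffSum_iterate_of_leftInverse hgf,
    ← iterate_add_apply, ← iterate_add_apply, show r - t + t + j = j + r by omega, hq.eq]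
  simpa [Nat.cast_sub ht] using hqψ (r - t + 1)

theorem sum_Ico_pseudoOrbit_add_le {a : ℕ} (hdom : ∀ x, φ x + ψ (f x) ≤ 2 * α) (ha : a ≤ L)
    (hgap : (L - a) * β ≤ birkhoffSum f φ L b - birkhoffSum f φ a b) :
    ∑ i ∈ Ico (P + a + 1) (P + L + 1), ψ (pseudoOrbit f q b P L j i) ≤
      (L - a) * (2 * α - β) := by
  rw [sum_Ico_pseudoOrbit_add_of_le ψ ha, iterate_succ_apply']
  have hdom' := birkhoffSum_apply_le_of_add_le hdom (L - a) (f^[a] b)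
  have hsplit := birkhoffSum_add f φ a (L - a) b
  rw [Nat.add_sub_cancel' ha] at hsplit
  rw [Nat.cast_sub ha] at hdom'
  linarith

theorem sum_Ico_pseudoOrbit_le {g : X → X} (hgf : LeftInverse g f) {m k : ℕ}
    (hq : IsPeriodicPt f m q) (hm : 0 < m) (hψM : ∀ x, |ψ x| ≤ M)
    (hqψ : ∀ n, birkhoffSum g ψ n q ≤ n * α) (hk : k ≤ P) :
    ∑ i ∈ Ico k P, ψ (pseudoOrbit f q b P L j i) ≤ (P - k) * α + 2 * m * M := by
  have hM : 0 ≤ M := (abs_nonneg _).trans (hψM q)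
  rw [sum_Ico_pseudoOrbit_of_le ψ hk]
  rcases hk.eq_or_lt with rfl | hkP
  · simp only [Nat.sub_self, birkhoffSum_zero, sub_self, zero_mul, zero_add]
    positivity
  obtain ⟨s, rfl⟩ := Nat.exists_eq_add_of_lt hkP
  obtain ⟨w, hwm, hw⟩ := hq.exists_le_iterate_eq_of_leftInverse hgf hm (s + k)
  rw [show k + s + 1 - k = s + 1 by omega, ← birkhoffSum_iterate_of_leftInverse hgf,
    ← iterate_add_apply, ← hw]
  have hshift := birkhoffSum_iterate_le (f := g) hψM (s + 1) w q
  have hwm' : 2 * w * M ≤ 2 * m * M := by gcongr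
  have hqψ' := hqψ (s + 1)
  push_cast at hqψ' ⊢
  linarith

theorem sum_Icc_pseudoOrbit_lt {g : X → X} (hgf : LeftInverse g f) {m r k : ℕ}
    (hq : IsPeriodicPt f m q) (hm : 0 < m) (hjr : j + r = m) (hψM : ∀ x, |ψ x| ≤ M)
    (hqψ : ∀ n, birkhoffSum g ψ n q ≤ n * α) (hdom : ∀ x, φ x + ψ (f x) ≤ 2 * α) (hαβ : α < β)
    (hgap : ∀ a ≤ L, (L - a) * β ≤ birkhoffSum f φ L b - birkhoffSum f φ a b)
    (hL : M + 2 * m * M - β ≤ 2 * L * (β - α)) (hkn : k ≤ P + L + 1 + r) :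
    ∑ i ∈ Icc k (P + L + 1 + r), ψ (pseudoOrbit f q b P L j i) <
      (((P + L + 1 + r : ℕ) : ℝ) - k + 1) * β := by
  have hq' : IsPeriodicPt f (j + r) q := hjr ▸ hq
  rcases le_or_gt (P + L + 1) k with hLk | hkL
  · obtain ⟨t, rfl⟩ := Nat.exists_eq_add_of_le hLk
    have htr : (t : ℝ) ≤ r := by exact_mod_cast (by omega : t ≤ r)
    have htail := sum_Icc_pseudoOrbit_add_add_le (P := P) (L := L) (b := b) hgf hq' hqψ
      (by omega : t ≤ r)
    have hlt : ((r : ℝ) - t + 1) * α < (r - t + 1) * β :=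
      mul_lt_mul_of_pos_left hαβ (by linarith)
    push_cast
    linarith
  have htail := sum_Icc_pseudoOrbit_add_add_le (P := P) (L := L) (b := b) hgf hq' hqψ r.zero_le
  have hr : ((r : ℝ) + 1) * α < (r + 1) * β := mul_lt_mul_of_pos_left hαβ (by positivity)
  simp only [add_zero, Nat.cast_zero, sub_zero] at htail
  push_cast
  rw [← sum_Ico_add_sum_Icc _ hkL.le (by omega)]
  rcases lt_or_ge P k with hPk | hkP
  · obtain ⟨a, rfl⟩ := Nat.exists_eq_add_of_lt hPk
    have hmid := sum_Ico_pseudoOrbit_add_le (P := P) (q := q) (j := j) hdom (by omega : a ≤ L)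
      (hgap a (by omega))
    have hLa : (L - a) * (2 * α - β) ≤ (L - a) * β :=
      mul_le_mul_of_nonneg_left (by linarith)
        (sub_nonneg.2 (by exact_mod_cast (by omega : a ≤ L)))
    push_cast
    linarith
  · rw [← sum_Ico_consecutive _ hkP (by omega : P ≤ P + L + 1),
      sum_eq_sum_Ico_succ_bot (by omega : P < P + L + 1)]
    have hpre := sum_Ico_pseudoOrbit_le (L := L) (b := b) (j := j) hgf hq hm hψM hqψ hkP
    have hmid := sum_Ico_pseudoOrbit_add_le (P := P) (q := q) (j := j) hdom L.zero_le
      (hgap 0 L.zero_le)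
    have hb := (abs_le.1 (hψM (pseudoOrbit f q b P L j P))).2
    have hPk : (P - k) * α ≤ (P - k) * β :=
      mul_le_mul_of_nonneg_left hαβ.le (sub_nonneg.2 (by exact_mod_cast hkP))
    simp only [add_zero, Nat.cast_zero, sub_zero] at hmid
    linarith

end Estimates

theorem exists_bad_segment_length {X : Type*} {f : X → X} {φ : X → ℝ} {b : X}
    {M α β₁ β₂ A : ℝ} {P m N : ℕ} (hφM : ∀ x, |φ x| ≤ M)
    (hbad : ∀ n, 0 ≤ birkhoffSum f φ n b) (hβ : β₁ ≤ β₂) (hβ₂ : β₂ < 0) (hA : A ≤ P * α)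
    (hP₁ : (m + 3) * (M - β₂) + m * M + 1 ≤ P * (β₂ - β₁))
    (hP₂ : (N + m + 2) * (M - β₂) + 1 ≤ P * (β₂ - α)) :
    ∃ L, N < L ∧
      (∀ a ≤ L + 1, A + birkhoffSum f φ a b + m * (M - β₂) < (P + a) * β₂) ∧
      (P + L + 1) * β₁ + m * M < A + birkhoffSum f φ (L + 1) b ∧
      ∀ a ≤ L, (L - a) * β₂ ≤ birkhoffSum f φ L b - birkhoffSum f φ a b := by
  set K := M - β₂
  set H := P * β₂ - A - (m + 2) * K - 1
  have hK : 0 < K := by linarith [(abs_nonneg _).trans (hφM b)]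
  have hNH : N * K ≤ H := by linarith
  have hstep : ∀ n : ℕ, |birkhoffSum f φ (n + 1) b - (n + 1 : ℕ) * β₂ -
      (birkhoffSum f φ n b - n * β₂)| ≤ K := fun n => by
    rw [birkhoffSum_succ, Nat.cast_succ, show ∀ s : ℝ,
      s + φ (f^[n] b) - (n + 1) * β₂ - (s - n * β₂) = φ (f^[n] b) - β₂ by intros; ring]
    exact (abs_sub _ _).trans (by rw [abs_of_neg hβ₂]; linarith [hφM (f^[n] b)])
  have hunbounded : ∃ n : ℕ, H < birkhoffSum f φ n b - n * β₂ := by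
    obtain ⟨n, hn⟩ := exists_nat_gt (H / -β₂)
    refine ⟨n, ?_⟩
    rw [div_lt_iff₀ (by linarith)] at hn
    linarith [hbad n]
  -- `L` is the first time the excess `S n - n β₂` of the Birkhoff sums `S n` along `b` exceeds
  -- `H`, which stays below the deficit `P β₂ - A` by enough to absorb two more steps of size at
  -- most `K` and then a tail of at most `m` steps along the orbit of `q`.
  obtain ⟨L, hHL, hbelow, habove, hnext⟩ := exists_first_passage hstep
    (by simp only [birkhoffSum_zero, Nat.cast_zero]; nlinarith) hunbounded
  refine ⟨L, ?_, fun a ha => ?_, ?_, fun a ha => ?_⟩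
  · have hSL := (abs_le.1 (abs_birkhoffSum_le (f := f) hφM L b)).2
    have : (N : ℝ) * K < L * K := by linarith
    exact_mod_cast lt_of_mul_lt_mul_right this hK.le
  · linarith [habove a ha]
  · have : 0 ≤ (L + 1) * (β₂ - β₁) := by positivity
    push_cast at hnext
    linarith
  · rcases ha.lt_or_eq with ha | rfl
    · linarith [hbelow a ha]
    · simp

/-- The abstract form of Lemma 4.3: given a 'good' periodic point `q` whose orbit is a
`δ`-net and a 'bad' point `b` with nonnegative Birkhoff sums of `φ`, one constructs a
`δ`-pseudo-orbit from `q` to itself which is `λ₂`-good in both directions but whose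
total `φ`-sum exceeds `n log λ₁`. -/
theorem exists_pseudo_orbit_good_but_not_contracting {X : Type*} [MetricSpace X]
    [CompactSpace X] (f : X ≃ₜ X) (φ ψ : X → ℝ) (hφ : Continuous φ) (hψ : Continuous ψ)
    (lam lam₁ lam₂ : ℝ) (h0 : 0 < lam) (h01 : lam < lam₁) (h12 : lam₁ < lam₂)
    (h21 : lam₂ < 1)
    (hdom : ∀ x : X, φ x + ψ (f x) < 2 * Real.log lam)
    (δ : ℝ) (hδ : 0 < δ) (q : X)
    (hper : ∃ m : ℕ, 1 ≤ m ∧ (⇑f)^[m] q = q)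
    (hnet : ∀ x : X, ∃ i : ℤ, dist x ((f.toEquiv ^ i) q) < δ)
    (hqφ : ∀ k : ℕ, 1 ≤ k →
      ∑ i ∈ Finset.range k, φ ((f.toEquiv ^ (i : ℤ)) q) ≤ k * Real.log lam)
    (hqψ : ∀ k : ℕ, 1 ≤ k →
      ∑ i ∈ Finset.range k, ψ ((f.toEquiv ^ (-(i : ℤ))) q) ≤ k * Real.log lam)
    (b : X)
    (hbad : ∀ k : ℕ, 1 ≤ k → 0 ≤ ∑ i ∈ Finset.range k, φ ((⇑f)^[i] b)) :
    ∃ n : ℕ, 1 ≤ n ∧ ∃ x : ℕ → X,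
      x 0 = q ∧ x n = q ∧
      (∀ i : ℕ, i < n → dist (f (x i)) (x (i + 1)) < δ) ∧
      (∀ k : ℕ, 1 ≤ k → k ≤ n →
        (∑ i ∈ Finset.range k, φ (x i) < k * Real.log lam₂) ∧
        (∑ i ∈ Finset.Icc k n, ψ (x i) < ((n : ℝ) - k + 1) * Real.log lam₂)) ∧
      (n : ℝ) * Real.log lam₁ < ∑ i ∈ Finset.range n, φ (x i) := by
  obtain ⟨m, hm, hq : IsPeriodicPt f m q⟩ := hper
  have hα : Real.log lam < Real.log lam₁ := Real.log_lt_log h0 h01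
  have hβ : Real.log lam₁ < Real.log lam₂ := Real.log_lt_log (h0.trans h01) h12
  have hβ₂ : Real.log lam₂ < 0 := Real.log_neg (by linarith) h21
  set α := Real.log lam
  set β₁ := Real.log lam₁
  set β₂ := Real.log lam₂
  obtain ⟨M, hφM, hψM⟩ : ∃ M, (∀ x, |φ x| ≤ M) ∧ ∀ x, |ψ x| ≤ M := by
    obtain ⟨C₁, h₁⟩ := isCompact_univ.exists_bound_of_continuousOn hφ.continuousOn
    obtain ⟨C₂, h₂⟩ := isCompact_univ.exists_bound_of_continuousOn hψ.continuousOn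
    exact ⟨max C₁ C₂, fun x => (h₁ x trivial).trans (le_max_left _ _),
      fun x => (h₂ x trivial).trans (le_max_right _ _)⟩
  have hM : 0 ≤ M := (abs_nonneg _).trans (hφM q)
  have hqφ' : ∀ n, birkhoffSum f φ n q ≤ n * α
    | 0 => by simp
    | n + 1 => by simpa [birkhoffSum, Equiv.Perm.coe_pow] using hqφ (n + 1) n.succ_pos
  have hqψ' : ∀ n, birkhoffSum f.symm ψ n q ≤ n * α
    | 0 => by simp
    | n + 1 => by
      simpa [birkhoffSum, zpow_neg, ← inv_pow, Equiv.Perm.coe_pow] using hqψ (n + 1) n.succ_pos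
  have hbad' : ∀ n, 0 ≤ birkhoffSum f φ n b
    | 0 => by simp
    | n + 1 => hbad (n + 1) n.succ_pos
  obtain ⟨N, hN⟩ := eventually_atTop.1
    (eventually_le_natCast_mul (c := M + 2 * m * M - β₂) (by linarith : 0 < 2 * (β₂ - α)))
  obtain ⟨P, hPb, hP, hP₁, hP₂⟩ :=
    ((Equiv.Perm.frequently_dist_iterate_lt f.toEquiv hm hq (hnet b)).and_eventually
      ((eventually_gt_atTop 0).and
        ((eventually_le_natCast_mul (c := (m + 3) * (M - β₂) + m * M + 1)
          (by linarith : 0 < β₂ - β₁)).and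
        (eventually_le_natCast_mul (c := (N + m + 2) * (M - β₂) + 1)
          (by linarith : 0 < β₂ - α))))).exists
  obtain ⟨L, hNL, hmid, htotal, hgap⟩ :=
    exists_bad_segment_length hφM hbad' hβ.le hβ₂ (hqφ' P) hP₁ hP₂
  obtain ⟨j, hjm, hj⟩ :=
    Equiv.Perm.exists_lt_dist_iterate_lt f.toEquiv hm hq (hnet (f^[L + 1] b))
  refine ⟨P + L + 1 + (m - j), by omega, pseudoOrbit f q b P L j, pseudoOrbit_of_lt hP, ?_,
    fun i _ => dist_pseudoOrbit_lt hδ hPb hj i, fun k hk hkn => ⟨?_, ?_⟩, ?_⟩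
  · rw [pseudoOrbit_add_add, ← iterate_add_apply, Nat.sub_add_cancel hjm.le, hq.eq]
  · exact sum_range_pseudoOrbit_lt hφM hqφ' (hα.trans hβ) (by linarith) (m.sub_le j) hmid hk hkn
  · exact sum_Icc_pseudoOrbit_lt f.symm_apply_apply hq hm (by omega) hψM hqψ'
      (fun x => (hdom x).le) (hα.trans hβ) hgap (by linarith [hN L hNL.le]) hkn
  · exact lt_sum_range_pseudoOrbit hφM (by linarith) (m.sub_le j) htotal
end

section
/- Let X be a compact metric space, f : X → X a continuous map, and φ : X → ℝ a continuous function. If for every x ∈ X there exists n ≥ 1 with ∑_{i=0}^{n-1} φ(f^i(x)) < 0, then there exist C ∈ ℝ and θ < 0 such that ∑_{i=0}^{n-1} φ(f^i(x)) ≤ C + nθ for every x ∈ X and every n ≥ 1. -/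
open Finset

/-- The compactness fact used at the start of the proof of Lemma 4.3: if every point
has some Birkhoff sum of `φ` which is negative, then the Birkhoff sums of `φ` decay
uniformly linearly. -/
theorem uniform_decay_of_pointwise_negative_sums {X : Type*} [MetricSpace X]
    [CompactSpace X] (f : X → X) (hf : Continuous f) (φ : X → ℝ) (hφ : Continuous φ)
    (h : ∀ x : X, ∃ n : ℕ, 1 ≤ n ∧ ∑ i ∈ Finset.range n, φ (f^[i] x) < 0) :
    ∃ C : ℝ, ∃ θ : ℝ, θ < 0 ∧ ∀ x : X, ∀ n : ℕ, 1 ≤ n →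
      ∑ i ∈ Finset.range n, φ (f^[i] x) ≤ C + n * θ := by
  by_cases hX : Nonempty X
  swap
  · exact ⟨0, -1, by norm_num, fun x => absurd ⟨x⟩ hX⟩
  set S : ℕ → X → ℝ := fun n x => ∑ i ∈ Finset.range n, φ (f^[i] x) with hS
  have hScont : ∀ n : ℕ, Continuous (S n) := fun n =>
    continuous_finset_sum _ (fun i _ => hφ.comp (hf.iterate i))
  choose n hn1 hn2 using h
  have hcover : (Set.univ : Set X) ⊆ ⋃ x : X, {y | S (n x) y < S (n x) x / 2} := by
    intro x _
    exact Set.mem_iUnion.2 ⟨x, by simpa using by linarith [hn2 x]⟩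
  obtain ⟨t, ht⟩ := isCompact_univ.elim_finite_subcover
    (fun x : X => {y | S (n x) y < S (n x) x / 2})
    (fun x => isOpen_lt (hScont (n x)) continuous_const) hcover
  have htne : t.Nonempty := by
    rcases hX with ⟨x0⟩
    rcases Set.mem_iUnion₂.1 (ht (Set.mem_univ x0)) with ⟨j, hj, _⟩
    exact ⟨j, hj⟩
  set ε : ℝ := t.inf' htne (fun j => -(S (n j) j) / 2) with hε
  have hεpos : 0 < ε := by
    rw [hε, Finset.lt_inf'_iff]
    intro j _
    linarith [hn2 j]
  have hεle : ∀ j ∈ t, ε ≤ -(S (n j) j) / 2 := fun j hj => Finset.inf'_le _ hj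
  set N : ℕ := t.sup' htne n with hN
  have hN1 : 1 ≤ N := by
    rcases htne with ⟨j, hj⟩
    exact le_trans (hn1 j) (Finset.le_sup' n hj)
  have hNle : ∀ j ∈ t, n j ≤ N := fun j hj => Finset.le_sup' n hj
  have key : ∀ x : X, ∃ j ∈ t, S (n j) x ≤ -ε := by
    intro x
    rcases Set.mem_iUnion₂.1 (ht (Set.mem_univ x)) with ⟨j, hj, hx⟩
    refine ⟨j, hj, ?_⟩
    have := hεle j hj
    have hx' : S (n j) x < S (n j) j / 2 := hx
    linarith
  obtain ⟨x0, hx0⟩ := hφ.exists_forall_ge' hX.some (by simp [Filter.cocompact_eq_bot])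
  set M : ℝ := max (φ x0) 0 with hM
  have hMnn : 0 ≤ M := le_max_right _ _
  have hφle : ∀ x : X, φ x ≤ M := fun x => le_trans (hx0 x) (le_max_left _ _)
  set θ : ℝ := -ε / N with hθ
  have hNpos : (0 : ℝ) < N := by exact_mod_cast hN1
  have hθneg : θ < 0 := div_neg_of_neg_of_pos (by linarith) hNpos
  have hθval : (N : ℝ) * θ = -ε := by
    rw [hθ]; field_simp
  refine ⟨N * M + ε, θ, hθneg, fun x m hm => ?_⟩
  induction m using Nat.strong_induction_on generalizing x with
  | _ m ih =>
    by_cases hmN : m ≤ N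
    · have h1 : S m x ≤ m * M := by
        calc S m x ≤ ∑ _i ∈ Finset.range m, M :=
              Finset.sum_le_sum (fun i _ => hφle _)
          _ = m * M := by simp [mul_comm]
      have hmN' : (m : ℝ) ≤ N := by exact_mod_cast hmN
      have h2 : (m : ℝ) * M ≤ N * M := mul_le_mul_of_nonneg_right hmN' hMnn
      have h3 : -ε ≤ (m : ℝ) * θ := by
        rw [← hθval]
        have : ((N : ℝ) - m) * θ ≤ 0 :=
          mul_nonpos_of_nonneg_of_nonpos (by linarith) (le_of_lt hθneg)
        nlinarith
      show S m x ≤ N * M + ε + m * θ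
      linarith
    · push_neg at hmN
      obtain ⟨j, hj, hjx⟩ := key x
      set k := n j with hk
      have hkN : k ≤ N := hNle j hj
      have hk1 : 1 ≤ k := hn1 j
      have hkm : k ≤ m := le_of_lt (lt_of_le_of_lt hkN hmN)
      have hsplit : S m x = S k x + S (m - k) (f^[k] x) := by
        have hadd : k + (m - k) = m := Nat.add_sub_cancel' hkm
        calc S m x = ∑ i ∈ Finset.range (k + (m - k)), φ (f^[i] x) := by rw [hadd]
          _ = (∑ i ∈ Finset.range k, φ (f^[i] x))
              + ∑ i ∈ Finset.range (m - k), φ (f^[k + i] x) :=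
            Finset.sum_range_add _ _ _
          _ = S k x + S (m - k) (f^[k] x) := by
            congr 1
            refine Finset.sum_congr rfl fun i _ => ?_
            rw [add_comm, Function.iterate_add_apply]
      have hrec : S (m - k) (f^[k] x) ≤ N * M + ε + (m - k : ℕ) * θ :=
        ih (m - k) (by omega) (f^[k] x) (by omega)
      have hcast : ((m - k : ℕ) : ℝ) = (m : ℝ) - k := by
        rw [Nat.cast_sub hkm]
      have hkθ : -ε ≤ (k : ℝ) * θ := by
        rw [← hθval]
        have hkN' : (k : ℝ) ≤ N := by exact_mod_cast hkN
        have : ((N : ℝ) - k) * θ ≤ 0 :=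
          mul_nonpos_of_nonneg_of_nonpos (by linarith) (le_of_lt hθneg)
        nlinarith
      show S m x ≤ N * M + ε + m * θ
      rw [hsplit]
      rw [hcast] at hrec
      nlinarith
end
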